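/- arXiv:1503.03860 — 9 statements merged into one kernel-verified Lean document; each statement's English description precedes it below -/
import Mathlib

section
/- If n = km > 1 is a spoof odd perfect number, then k is an odd perfect square and m ≡ 1 (mod 4). -/
/-!
Since `k * m` is odd, `m + 1 = 2 (j + 1)` and the spoof equation halves to
`σ(k) (j + 1) = k m`, an odd number. Hence `j + 1` is odd, i.e. `m ≡ 1 (mod 4)`, and `σ(k)` is odd.
For an odd prime `p`, `σ(p^e) = 1 + p + ⋯ + p^e` is a sum of `e + 1` odd terms, so it is odd
exactly when `e` is even; by multiplicativity of `σ`, an odd `k` with `σ(k)` odd is a square.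
-/

open ArithmeticFunction
open scoped ArithmeticFunction.sigma

open Finset in
lemma Odd.odd_geom_sum_iff {p : ℕ} (hp : Odd p) (n : ℕ) :
    Odd (∑ i ∈ range n, p ^ i) ↔ Odd n := by
  rw [odd_sum_iff_odd_card_odd, filter_true_of_mem fun i _ => hp.pow, card_range]

lemma Nat.Prime.odd_sigma_one_pow_iff {p : ℕ} (hp : p.Prime) (hp_odd : Odd p) (n : ℕ) :
    Odd (σ 1 (p ^ n)) ↔ Even n := by
  rw [sigma_one_apply_prime_pow hp, hp_odd.odd_geom_sum_iff, Nat.odd_add_one, Nat.not_odd_iff_even]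

lemma Nat.isSquare_of_odd_of_odd_sigma_one {k : ℕ} (hk : Odd k) (hσ : Odd (σ 1 k)) :
    IsSquare k := by
  induction k using Nat.recOnPosPrimePosCoprime with
  | zero => exact absurd hk Nat.not_odd_zero
  | one => exact IsSquare.one
  | prime_pow p n hp hn =>
    have hp_odd : Odd p := Odd.of_dvd_nat hk (dvd_pow_self p hn.ne')
    exact ((hp.odd_sigma_one_pow_iff hp_odd n).mp hσ).isSquare_pow p
  | coprime a b _ _ hab iha ihb =>
    rw [isMultiplicative_sigma.map_mul_of_coprime hab, Nat.odd_mul] at hσ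
    obtain ⟨ha, hb⟩ := Nat.odd_mul.mp hk
    exact (iha ha hσ.1).mul (ihb hb hσ.2)

theorem stmt_0_general (k m : ℕ) (hodd : Odd (k * m))
    (hspoof : σ 1 k * (m + 1) = 2 * (k * m)) :
    Odd k ∧ IsSquare k ∧ m % 4 = 1 := by
  obtain ⟨hk, ⟨j, rfl⟩⟩ := Nat.odd_mul.mp hodd
  have halved : σ 1 k * (j + 1) = k * (2 * j + 1) :=
    mul_left_cancel₀ two_ne_zero (by rw [← hspoof]; ring)
  rw [← halved, Nat.odd_mul] at hodd
  obtain ⟨hσ, ⟨i, hi⟩⟩ := hodd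
  exact ⟨hk, Nat.isSquare_of_odd_of_odd_sigma_one hk hσ, by omega⟩

theorem stmt_0 (k m : ℕ) (hk : 1 < k) (hm : 1 < m) (hodd : Odd (k * m))
    (hspoof : σ 1 k * (m + 1) = 2 * (k * m)) :
    Odd k ∧ IsSquare k ∧ m % 4 = 1 :=
  stmt_0_general k m hodd hspoof
end

section
/- If n = km > 1 is a spoof odd perfect number, then gcd(k, σ(k)) = 2k − σ(k). -/
/-!
Put d = 2k − σ(k). The spoof equation σ(k)(m + 1) = 2km says σ(k) = m d, hence 2k = (m + 1) d.
Writing the odd number m as 2c + 1 gives k = (c + 1) d and σ(k) = (2c + 1) d, and c + 1 and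
2c + 1 are coprime, so gcd(k, σ(k)) = d.
-/

open ArithmeticFunction
open scoped ArithmeticFunction.sigma

theorem Nat.coprime_succ_two_mul_add_one (c : ℕ) : Nat.Coprime (c + 1) (2 * c + 1) := by
  rw [show 2 * c + 1 = c + (c + 1) by ring, Nat.coprime_add_self_right,
    Nat.coprime_self_add_left, Nat.coprime_one_left_iff]
  trivial

theorem Nat.gcd_eq_two_mul_sub_of_mul_succ_eq {k s m : ℕ} (hm : Odd m)
    (h : s * (m + 1) = 2 * (k * m)) : Nat.gcd k s = 2 * k - s := by
  obtain ⟨c, rfl⟩ := hm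
  have hle : s ≤ 2 * k := by nlinarith
  set d := 2 * k - s
  have hsd : 2 * k = s + d := by omega
  have hs : s = d * (2 * c + 1) := by
    rw [← mul_assoc, hsd] at h
    linarith
  have hk : k = d * (c + 1) := by linarith
  rw [hk, hs, Nat.gcd_mul_left, Nat.coprime_succ_two_mul_add_one, mul_one]

theorem stmt_2_general (k m : ℕ) (hodd : Odd (k * m))
    (hspoof : σ 1 k * (m + 1) = 2 * (k * m)) :
    Nat.gcd k (σ 1 k) = 2 * k - σ 1 k :=
  Nat.gcd_eq_two_mul_sub_of_mul_succ_eq (Nat.odd_mul.mp hodd).2 hspoof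

theorem stmt_2 (k m : ℕ) (hk : 1 < k) (hm : 1 < m) (hodd : Odd (k * m))
    (hspoof : σ 1 k * (m + 1) = 2 * (k * m)) :
    Nat.gcd k (σ 1 k) = 2 * k - σ 1 k :=
  stmt_2_general k m hodd hspoof
end

section
/- Let n = km > 1 be a spoof odd perfect number. If σ(k) = m, then gcd(k, σ(k)) = 1, σ(k) = 2k − 1 (that is, k is almost perfect), and k < m. -/
open ArithmeticFunction
open scoped ArithmeticFunction.sigma

theorem Nat.add_one_eq_two_mul_of_mul_add_one_eq {k m : ℕ} (hm : 0 < m)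
    (h : m * (m + 1) = 2 * (k * m)) : m + 1 = 2 * k :=
  Nat.eq_of_mul_eq_mul_left hm (by rw [h]; ring)

theorem Nat.coprime_of_add_one_eq_two_mul {k m : ℕ} (h : m + 1 = 2 * k) : Nat.Coprime k m :=
  Nat.Coprime.coprime_mul_left (k := 2) (h ▸ Nat.coprime_self_add_left.mpr (Nat.coprime_one_left m))

theorem stmt_3_general (k m : ℕ) (hk : 1 < k) (hm : 1 < m)
    (hspoof : σ 1 k * (m + 1) = 2 * (k * m)) (hσ : σ 1 k = m) :
    Nat.gcd k (σ 1 k) = 1 ∧ σ 1 k = 2 * k - 1 ∧ k < m := by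
  rw [hσ] at hspoof ⊢
  have hm_succ : m + 1 = 2 * k := Nat.add_one_eq_two_mul_of_mul_add_one_eq (by omega) hspoof
  exact ⟨Nat.coprime_of_add_one_eq_two_mul hm_succ, by omega, by omega⟩

theorem stmt_3 (k m : ℕ) (hk : 1 < k) (hm : 1 < m) (hodd : Odd (k * m))
    (hspoof : σ 1 k * (m + 1) = 2 * (k * m)) (hσ : σ 1 k = m) :
    Nat.gcd k (σ 1 k) = 1 ∧ σ 1 k = 2 * k - 1 ∧ k < m :=
  stmt_3_general k m hk hm hspoof hσ
end

section
/- Let n = km > 1 be a spoof odd perfect number with m composite. Then 1 < 2k/σ(k) = (m+1)/m ≤ 10/9 and 9/5 ≤ σ(k)/k < 2 (in particular, k is deficient). -/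
/-!
From `σ(k)(m + 1) = 2km` one reads off `2k / σ(k) = (m + 1) / m` and `σ(k) / k = 2m / (m + 1)`,
so every bound is a bound on `m`. An odd composite `m` is at least `9`, which gives
`(m + 1) / m ≤ 10 / 9` and `2m / (m + 1) ≥ 9 / 5`.
-/

open ArithmeticFunction
open scoped ArithmeticFunction.sigma

theorem Nat.nine_le_of_odd_of_not_prime {m : ℕ} (hodd : Odd m) (hm : 1 < m) (hcomp : ¬ m.Prime) :
    9 ≤ m := by
  by_contra! h
  interval_cases m <;> revert hodd hcomp <;> decide

section RationalBounds

variable {m : ℚ}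

theorem one_lt_add_one_div (hm : 0 < m) : 1 < (m + 1) / m := by
  rw [lt_div_iff₀ hm]
  linarith

theorem add_one_div_le_ten_ninths (hm : 9 ≤ m) : (m + 1) / m ≤ 10 / 9 := by
  rw [div_le_div_iff₀ (by linarith) (by norm_num)]
  linarith

theorem nine_fifths_le_two_mul_div_add_one (hm : 9 ≤ m) : 9 / 5 ≤ 2 * m / (m + 1) := by
  rw [le_div_iff₀ (by linarith)]
  linarith

theorem two_mul_div_add_one_lt_two (hm : 0 ≤ m) : 2 * m / (m + 1) < 2 := by
  rw [div_lt_iff₀ (by linarith)]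
  linarith

end RationalBounds

section SpoofEquation

variable {k m : ℕ}

theorem two_mul_div_sigma_eq_of_spoof (hk : k ≠ 0) (hm : m ≠ 0)
    (hspoof : σ 1 k * (m + 1) = 2 * (k * m)) : (2 * k : ℚ) / σ 1 k = ((m : ℚ) + 1) / m := by
  have hσ : (σ 1 k : ℚ) ≠ 0 := by exact_mod_cast (sigma_pos 1 k hk).ne'
  rw [div_eq_div_iff hσ (by exact_mod_cast hm)]
  exact_mod_cast (by linarith : 2 * k * m = (m + 1) * σ 1 k)

theorem sigma_div_eq_of_spoof (hk : k ≠ 0) (hspoof : σ 1 k * (m + 1) = 2 * (k * m)) :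
    (σ 1 k : ℚ) / k = 2 * (m : ℚ) / ((m : ℚ) + 1) := by
  rw [div_eq_div_iff (by exact_mod_cast hk) (by positivity)]
  exact_mod_cast (by linarith : σ 1 k * (m + 1) = 2 * m * k)

end SpoofEquation

theorem stmt_4_general (k m : ℕ) (hm : 1 < m) (hodd : Odd (k * m))
    (hspoof : σ 1 k * (m + 1) = 2 * (k * m)) (hcomp : ¬ m.Prime) :
    1 < (2 * k : ℚ) / (σ 1 k : ℚ) ∧ (2 * k : ℚ) / (σ 1 k : ℚ) = ((m : ℚ) + 1) / (m : ℚ) ∧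
      ((m : ℚ) + 1) / (m : ℚ) ≤ 10 / 9 ∧
      (9 : ℚ) / 5 ≤ (σ 1 k : ℚ) / (k : ℚ) ∧ (σ 1 k : ℚ) / (k : ℚ) < 2 := by
  have hk : k ≠ 0 := (Nat.Odd.of_mul_left hodd).pos.ne'
  have hm9 : (9 : ℚ) ≤ m := by
    exact_mod_cast Nat.nine_le_of_odd_of_not_prime (Nat.Odd.of_mul_right hodd) hm hcomp
  have hratio := two_mul_div_sigma_eq_of_spoof hk (by omega) hspoof
  have habund := sigma_div_eq_of_spoof hk hspoof
  rw [hratio, habund]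
  exact ⟨one_lt_add_one_div (by positivity), rfl, add_one_div_le_ten_ninths hm9,
    nine_fifths_le_two_mul_div_add_one hm9, two_mul_div_add_one_lt_two (by positivity)⟩

theorem stmt_4 (k m : ℕ) (hk : 1 < k) (hm : 1 < m) (hodd : Odd (k * m))
    (hspoof : σ 1 k * (m + 1) = 2 * (k * m)) (hcomp : ¬ m.Prime) :
    1 < (2 * k : ℚ) / (σ 1 k : ℚ) ∧ (2 * k : ℚ) / (σ 1 k : ℚ) = ((m : ℚ) + 1) / (m : ℚ) ∧
      ((m : ℚ) + 1) / (m : ℚ) ≤ 10 / 9 ∧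
      (9 : ℚ) / 5 ≤ (σ 1 k : ℚ) / (k : ℚ) ∧ (σ 1 k : ℚ) / (k : ℚ) < 2 :=
  stmt_4_general k m hm hodd hspoof hcomp
end

section
/- If n = km > 1 is a spoof odd perfect number, then k ≠ m. -/
open ArithmeticFunction
open scoped ArithmeticFunction.sigma

theorem Nat.succ_dvd_two_of_succ_dvd_two_mul_sq {k : ℕ} (h : k + 1 ∣ 2 * k ^ 2) : k + 1 ∣ 2 :=
  have hcop : Nat.Coprime (k + 1) k := by simp [Nat.coprime_comm]
  (hcop.pow_right 2).dvd_of_dvd_mul_right h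

theorem Nat.le_one_of_succ_dvd_two_mul_sq {k : ℕ} (h : k + 1 ∣ 2 * k ^ 2) : k ≤ 1 := by
  have := Nat.le_of_dvd two_pos (Nat.succ_dvd_two_of_succ_dvd_two_mul_sq h)
  omega

theorem stmt_6_general (k m : ℕ) (hk : 1 < k)
    (hspoof : σ 1 k * (m + 1) = 2 * (k * m)) :
    k ≠ m := by
  rintro rfl
  have hdvd : k + 1 ∣ 2 * k ^ 2 := ⟨σ 1 k, by rw [sq, ← hspoof, mul_comm]⟩
  exact (Nat.le_one_of_succ_dvd_two_mul_sq hdvd).not_gt hk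

theorem stmt_6 (k m : ℕ) (hk : 1 < k) (hm : 1 < m) (hodd : Odd (k * m))
    (hspoof : σ 1 k * (m + 1) = 2 * (k * m)) :
    k ≠ m :=
  stmt_6_general k m hk hspoof
end

section
/- Let n = km > 1 be a spoof odd perfect number with m composite. Then k is almost perfect (that is, σ(k) = 2k − 1) if and only if k < m. -/
/-!
With `d = 2k - σ(k)` the spoof equation reads `d (m + 1) = 2k`. Hence `d ≥ 1`; `d = 1` means
`m = 2k - 1 > k`, while `d ≥ 2` forces `m < k`.
-/

open ArithmeticFunction
open scoped ArithmeticFunction.sigma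

theorem two_mul_sub_mul_succ_eq {s k m : ℕ} (h : s * (m + 1) = 2 * (k * m)) :
    (2 * k - s) * (m + 1) = 2 * k := by
  have hs : s ≤ 2 * k := Nat.le_of_mul_le_mul_right (by rw [h]; nlinarith) m.succ_pos
  rw [Nat.sub_mul, h, mul_add, mul_one, ← mul_assoc]
  omega

theorem lt_iff_eq_one_of_mul_succ_eq {d k m : ℕ} (hk : 1 < k) (h : d * (m + 1) = 2 * k) :
    k < m ↔ d = 1 := by
  rcases d with _ | _ | d
  · omega
  · omega
  · have : 2 * (m + 1) ≤ 2 * k := h ▸ Nat.mul_le_mul_right _ (by omega)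
    omega

theorem stmt_7_general (k m : ℕ) (hk : 1 < k)
    (hspoof : σ 1 k * (m + 1) = 2 * (k * m)) :
    σ 1 k = 2 * k - 1 ↔ k < m := by
  rw [lt_iff_eq_one_of_mul_succ_eq hk (two_mul_sub_mul_succ_eq hspoof)]
  omega

theorem stmt_7 (k m : ℕ) (hk : 1 < k) (hm : 1 < m) (hodd : Odd (k * m))
    (hspoof : σ 1 k * (m + 1) = 2 * (k * m)) (hcomp : ¬ m.Prime) :
    σ 1 k = 2 * k - 1 ↔ k < m :=
  stmt_7_general k m hk hspoof
end

section
/- Let n = km > 1 be a spoof odd perfect number. If m < k, then (m+1)/k ≤ 2/3 and 3 ≤ σ(k)/m; in particular, (m+1)/k ≤ 2/3 < 3 ≤ σ(k)/m. -/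
/-!
Since `m + 1` is coprime to `m`, the spoof equation `σ(k)(m + 1) = 2km` forces `m + 1 ∣ 2k`.
The cofactor `2k / (m + 1)` exceeds `1` because `m < k`, and it is not `2`, since `k = m + 1`
would be even; hence `3(m + 1) ≤ 2k`. Feeding this back into the spoof equation gives
`3m(m + 1) ≤ σ(k)(m + 1)`, i.e. `3m ≤ σ(k)`.
-/

open ArithmeticFunction
open scoped ArithmeticFunction.sigma

theorem Nat.succ_dvd_of_mul_succ_eq_mul {a b m : ℕ} (h : a * (m + 1) = b * m) : m + 1 ∣ b :=
  (Nat.coprime_self_add_left.mpr (Nat.coprime_one_left m)).dvd_of_dvd_mul_right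
    ⟨a, by rw [← h, mul_comm]⟩

theorem Nat.three_mul_succ_le_two_mul_of_succ_dvd {k m : ℕ} (hk : Odd k) (hm : Odd m)
    (hlt : m < k) (hdvd : m + 1 ∣ 2 * k) : 3 * (m + 1) ≤ 2 * k := by
  obtain ⟨d, hd⟩ := hdvd
  have hk_ne : k ≠ m + 1 := by
    rintro rfl
    exact Nat.not_even_iff_odd.mpr hk hm.add_one
  have hd3 : 3 ≤ d := by
    by_contra! hd3
    interval_cases d <;> omega
  calc 3 * (m + 1) ≤ d * (m + 1) := Nat.mul_le_mul_right _ hd3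
    _ = 2 * k := by rw [hd, mul_comm]

theorem Nat.three_mul_le_of_mul_succ_eq {a k m : ℕ} (h : a * (m + 1) = 2 * k * m)
    (hk : 3 * (m + 1) ≤ 2 * k) : 3 * m ≤ a := by
  refine Nat.le_of_mul_le_mul_right ?_ m.succ_pos
  calc 3 * m * (m + 1) = 3 * (m + 1) * m := by ring
    _ ≤ 2 * k * m := Nat.mul_le_mul_right _ hk
    _ = a * (m + 1) := h.symm

theorem stmt_8_general (k m : ℕ) (hodd : Odd (k * m))
    (hspoof : σ 1 k * (m + 1) = 2 * (k * m)) (hlt : m < k) :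
    ((m : ℚ) + 1) / (k : ℚ) ≤ 2 / 3 ∧ (3 : ℚ) ≤ (σ 1 k : ℚ) / (m : ℚ) := by
  obtain ⟨hk, hm⟩ := Nat.odd_mul.mp hodd
  rw [← mul_assoc] at hspoof
  have hsucc : 3 * (m + 1) ≤ 2 * k := Nat.three_mul_succ_le_two_mul_of_succ_dvd hk hm hlt
    (Nat.succ_dvd_of_mul_succ_eq_mul hspoof)
  have hσ : 3 * m ≤ σ 1 k := Nat.three_mul_le_of_mul_succ_eq hspoof hsucc
  have hk_pos : (0 : ℚ) < k := by exact_mod_cast hk.pos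
  have hm_pos : (0 : ℚ) < m := by exact_mod_cast hm.pos
  constructor
  · rw [div_le_div_iff₀ hk_pos (by norm_num)]
    exact_mod_cast (mul_comm _ _).trans_le hsucc
  · rw [le_div_iff₀ hm_pos]
    exact_mod_cast hσ

theorem stmt_8 (k m : ℕ) (hk : 1 < k) (hm : 1 < m) (hodd : Odd (k * m))
    (hspoof : σ 1 k * (m + 1) = 2 * (k * m)) (hlt : m < k) :
    ((m : ℚ) + 1) / (k : ℚ) ≤ 2 / 3 ∧ (3 : ℚ) ≤ (σ 1 k : ℚ) / (m : ℚ) :=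
  stmt_8_general k m hodd hspoof hlt
end

section
/- Let n = km > 1 be a spoof odd perfect number with m composite, and let s be the positive integer with s² = k. If gcd(m, s) = 1, then (m+1)/s ≠ σ(s)/m, i.e., m·(m+1) ≠ s·σ(s). -/
/-!
Since `gcd(m, s) = 1`, the equation `m (m + 1) = s σ(s)` forces `s ∣ m + 1`. On the other hand
`s σ(s) ≤ σ(s²)`, so the spoof equation `σ(s²) (m + 1) = 2 s² m` gives `(m + 1)² ≤ 2 s²`; hence
`m + 1 = s`. But then `m = σ(m + 1) ≥ m + 1`.
-/

open ArithmeticFunction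
open scoped ArithmeticFunction.sigma

namespace ArithmeticFunction

theorem le_sigma_one (n : ℕ) : n ≤ σ 1 n := by
  rw [sigma_one_apply, Nat.sum_divisors_eq_sum_properDivisors_add_self]
  exact Nat.le_add_left n _

/-- Multiplying the divisors of `b` by `a` gives distinct divisors of `a * b`. -/
theorem mul_sigma_one_le_sigma_one_mul (a b : ℕ) : a * σ 1 b ≤ σ 1 (a * b) := by
  rcases Nat.eq_zero_or_pos a with rfl | ha
  · simp
  rw [sigma_one_apply, sigma_one_apply, Finset.mul_sum]
  calc ∑ d ∈ b.divisors, a * d = ∑ e ∈ b.divisors.image (a * ·), e :=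
        (Finset.sum_image (f := fun e => e) fun _ _ _ _ hxy =>
          Nat.eq_of_mul_eq_mul_left ha hxy).symm
    _ ≤ ∑ e ∈ (a * b).divisors, e := Finset.sum_le_sum_of_subset fun e he => ?_
  obtain ⟨d, hd, rfl⟩ := Finset.mem_image.mp he
  rw [Nat.mem_divisors] at hd ⊢
  exact ⟨mul_dvd_mul_left a hd.1, mul_ne_zero ha.ne' hd.2⟩

end ArithmeticFunction

theorem succ_sq_le_two_mul_sq_of_spoof {m s : ℕ} (hm : m ≠ 0)
    (hspoof : σ 1 (s ^ 2) * (m + 1) = 2 * (s ^ 2 * m)) (h : m * (m + 1) = s * σ 1 s) :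
    (m + 1) ^ 2 ≤ 2 * s ^ 2 := by
  have hle : m * (m + 1) ^ 2 ≤ m * (2 * s ^ 2) :=
    calc m * (m + 1) ^ 2 = s * σ 1 s * (m + 1) := by rw [← h]; ring
      _ ≤ σ 1 (s ^ 2) * (m + 1) := by
        gcongr
        simpa [sq] using mul_sigma_one_le_sigma_one_mul s s
      _ = m * (2 * s ^ 2) := by rw [hspoof]; ring
  exact Nat.le_of_mul_le_mul_left hle (Nat.pos_of_ne_zero hm)

theorem Nat.eq_of_dvd_of_sq_le_two_mul_sq {a b : ℕ} (hab : a ∣ b) (hb : b ≠ 0)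
    (h : b ^ 2 ≤ 2 * a ^ 2) : b = a := by
  obtain ⟨t, rfl⟩ := hab
  have ha : 0 < a ^ 2 := pow_pos (Nat.pos_of_ne_zero (left_ne_zero_of_mul hb)) 2
  have ht : t ^ 2 ≤ 2 := by
    rw [mul_pow] at h
    exact Nat.le_of_mul_le_mul_left (by linarith) ha
  have ht1 : t = 1 := by
    have : t ≠ 0 := right_ne_zero_of_mul hb
    have : t ≤ 1 := by nlinarith
    omega
  rw [ht1, mul_one]

theorem mul_succ_ne_succ_mul_sigma_one (m : ℕ) : m * (m + 1) ≠ (m + 1) * σ 1 (m + 1) := by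
  have := le_sigma_one (m + 1)
  nlinarith

theorem stmt_10_general (k m s : ℕ) (hm : 1 < m)
    (hspoof : σ 1 k * (m + 1) = 2 * (k * m))
    (hs : 0 < s) (hsq : s ^ 2 = k) (hgcd : Nat.gcd m s = 1) :
    ((m : ℚ) + 1) / (s : ℚ) ≠ (σ 1 s : ℚ) / (m : ℚ) ∧ m * (m + 1) ≠ s * σ 1 s := by
  subst hsq
  have key : m * (m + 1) ≠ s * σ 1 s := by
    intro h
    have hdvd : s ∣ m + 1 := (Nat.Coprime.symm hgcd).dvd_of_dvd_mul_left (h ▸ dvd_mul_right s _)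
    have hsucc : m + 1 = s := Nat.eq_of_dvd_of_sq_le_two_mul_sq hdvd m.succ_ne_zero
      (succ_sq_le_two_mul_sq_of_spoof (by omega) hspoof h)
    subst hsucc
    exact mul_succ_ne_succ_mul_sigma_one m h
  refine ⟨fun hq => key ?_, key⟩
  rw [div_eq_div_iff (by positivity) (by positivity)] at hq
  exact_mod_cast (by linarith : (m : ℚ) * (m + 1) = s * σ 1 s)

theorem stmt_10 (k m s : ℕ) (hk : 1 < k) (hm : 1 < m) (hodd : Odd (k * m))
    (hspoof : σ 1 k * (m + 1) = 2 * (k * m)) (hcomp : ¬ m.Prime)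
    (hs : 0 < s) (hsq : s ^ 2 = k) (hgcd : Nat.gcd m s = 1) :
    ((m : ℚ) + 1) / (s : ℚ) ≠ (σ 1 s : ℚ) / (m : ℚ) ∧ m * (m + 1) ≠ s * σ 1 s :=
  stmt_10_general k m s hm hspoof hs hsq hgcd
end

section
/- Let n = km > 1 be a spoof odd perfect number with m composite, and let s be the positive integer with s² = k. Then (m+1)/m < σ(s)/s; consequently, if σ(s) < m+1 then s < m, and if m < s then m+1 < σ(s). -/
/-!
Since `σ` is submultiplicative, `σ(k) = σ(s²) ≤ σ(s)²`, so the spoof equation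
`σ(k)/k = 2m/(m+1)` gives `(σ(s)/s)² ≥ 2m/(m+1)`. A composite `m` is at least `4`, and then
`2m/(m+1) > ((m+1)/m)²` because `2m³ > (m+1)³`.
-/

open ArithmeticFunction
open scoped ArithmeticFunction.sigma

theorem ArithmeticFunction.sigma_mul_le (k a b : ℕ) : σ k (a * b) ≤ σ k a * σ k b := by
  simp only [sigma_apply, Nat.divisors_mul, ← Finset.image_mul_product, Finset.sum_mul_sum,
    ← Finset.sum_product', ← mul_pow]
  exact Finset.sum_image_le_of_nonneg fun _ _ => Nat.zero_le _

theorem Nat.four_le_of_not_prime {m : ℕ} (hm : 1 < m) (hcomp : ¬ m.Prime) : 4 ≤ m := by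
  by_contra! h
  interval_cases m <;> norm_num at hcomp

theorem mul_succ_lt_mul_of_two_mul_sq_le {a s m : ℕ} (hm : 4 ≤ m) (hs : 0 < s)
    (h : 2 * (s ^ 2 * m) ≤ a ^ 2 * (m + 1)) : (m + 1) * s < a * m := by
  by_contra! hle
  have hsq : (a * m) ^ 2 * (m + 1) ≤ ((m + 1) * s) ^ 2 * (m + 1) := by gcongr
  have hcube : (m + 1) ^ 3 < 2 * m ^ 3 := by nlinarith
  nlinarith [Nat.mul_le_mul_right (m ^ 2) h, pow_pos hs 2]

theorem stmt_13_general (k m s : ℕ) (hm : 1 < m)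
    (hspoof : σ 1 k * (m + 1) = 2 * (k * m)) (hcomp : ¬ m.Prime)
    (hs : 0 < s) (hsq : s ^ 2 = k) :
    ((m : ℚ) + 1) / (m : ℚ) < (σ 1 s : ℚ) / (s : ℚ) ∧
      (σ 1 s < m + 1 → s < m) ∧ (m < s → m + 1 < σ 1 s) := by
  subst hsq
  have hσ : 2 * (s ^ 2 * m) ≤ σ 1 s ^ 2 * (m + 1) := by
    rw [← hspoof, sq, sq]
    exact Nat.mul_le_mul_right _ (sigma_mul_le 1 s s)
  have hkey := mul_succ_lt_mul_of_two_mul_sq_le (Nat.four_le_of_not_prime hm hcomp) hs hσ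
  refine ⟨?_, fun h => ?_, fun h => ?_⟩
  · rw [div_lt_div_iff₀ (by positivity) (by positivity)]
    exact_mod_cast hkey
  · nlinarith
  · nlinarith

theorem stmt_13 (k m s : ℕ) (hk : 1 < k) (hm : 1 < m) (hodd : Odd (k * m))
    (hspoof : σ 1 k * (m + 1) = 2 * (k * m)) (hcomp : ¬ m.Prime)
    (hs : 0 < s) (hsq : s ^ 2 = k) :
    ((m : ℚ) + 1) / (m : ℚ) < (σ 1 s : ℚ) / (s : ℚ) ∧
      (σ 1 s < m + 1 → s < m) ∧ (m < s → m + 1 < σ 1 s) :=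
  stmt_13_general k m s hm hspoof hcomp hs hsq
end
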